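/- M-step closed form for the Gaussian parameters (weighted Gaussian maximum likelihood): let x_1,…,x_N ∈ ℝ^d, let w_1,…,w_N ≥ 0 with W = Σ_{i=1}^N w_i > 0, and define μ* = (1/W)·Σ_{i=1}^N w_i·x_i and Σ* = (1/W)·Σ_{i=1}^N w_i·(x_i − μ*)(x_i − μ*)ᵀ; assume Σ* is positive definite. Then for every μ ∈ ℝ^d and every positive definite matrix Σ ∈ ℝ^{d×d}, Σ_{i=1}^N w_i·log N(x_i; μ*, Σ*) ≥ Σ_{i=1}^N w_i·log N(x_i; μ, Σ). -/

import Mathlib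

open Matrix

/-- Multivariate Gaussian log-density with mean `μ` and covariance `S`. -/
noncomputable def gaussLogDensity (d : ℕ) (x μ : Fin d → ℝ)
    (S : Matrix (Fin d) (Fin d) ℝ) : ℝ :=
  -((d : ℝ) / 2) * Real.log (2 * Real.pi) - (1 / 2) * Real.log S.det
    - (1 / 2) * ((x - μ) ⬝ᵥ (S⁻¹ *ᵥ (x - μ)))

/-! Expanding around the weighted mean `μ*` (the cross terms cancel) gives
`∑ wᵢ (xᵢ - μ)ᵀ S⁻¹ (xᵢ - μ) = W tr(S⁻¹ Σ*) + W (μ* - μ)ᵀ S⁻¹ (μ* - μ)`, so the weighted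
log-likelihood is `W` times `const - ½ (log det S + tr(S⁻¹ Σ*) + (μ* - μ)ᵀ S⁻¹ (μ* - μ))`.
The last term is minimised at `μ = μ*`. For the rest, `M = C S⁻¹ C` with `C² = Σ*` is positive
definite with `det M = det Σ* / det S` and `tr M = tr(S⁻¹ Σ*)`, and `log det M ≤ tr M - d`
because `log λ ≤ λ - 1` on each eigenvalue; this is `log det S + tr(S⁻¹ Σ*) ≥ log det Σ* + d`. -/

theorem sum_smul_sub_inv_smul_sum_smul {ι 𝕜 E : Type*} [Fintype ι] [Field 𝕜] [AddCommGroup E]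
    [Module 𝕜 E] (w : ι → 𝕜) (x : ι → E) (hW : ∑ i, w i ≠ 0) :
    ∑ i, w i • (x i - (∑ j, w j)⁻¹ • ∑ j, w j • x j) = 0 := by
  simp only [smul_sub, Finset.sum_sub_distrib, ← Finset.sum_smul, smul_inv_smul₀ hW, sub_self]

namespace Matrix

variable {ι n R : Type*} [Fintype ι] [Fintype n] [CommRing R]

theorem sum_mul_dotProduct_mulVec_eq_trace (w : ι → R) (v : ι → n → R) (P : Matrix n n R) :
    ∑ i, w i * (v i ⬝ᵥ (P *ᵥ v i)) = (P * ∑ i, w i • vecMulVec (v i) (v i)).trace := by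
  simp only [Matrix.mul_sum, Matrix.mul_smul, trace_sum, trace_smul, mul_vecMulVec,
    trace_vecMulVec, dotProduct_comm (P *ᵥ _), smul_eq_mul]

theorem sum_mul_dotProduct_mulVec_sub_eq (w : ι → R) (x : ι → n → R) (P : Matrix n n R)
    {m : n → R} (hm : ∑ i, w i • (x i - m) = 0) (ν : n → R) :
    ∑ i, w i * ((x i - ν) ⬝ᵥ (P *ᵥ (x i - ν)))
      = ∑ i, w i * ((x i - m) ⬝ᵥ (P *ᵥ (x i - m))) + (∑ i, w i) * ((m - ν) ⬝ᵥ (P *ᵥ (m - ν))) := by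
  have hsplit : ∀ i, x i - ν = (x i - m) + (m - ν) := fun i => by abel
  have hcross₁ : ∑ i, (w i • (x i - m)) ⬝ᵥ (P *ᵥ (m - ν)) = 0 := by
    rw [← sum_dotProduct, hm, zero_dotProduct]
  have hcross₂ : ∑ i, (m - ν) ⬝ᵥ (P *ᵥ (w i • (x i - m))) = 0 := by
    rw [← dotProduct_sum, ← mulVec_sum, hm, mulVec_zero, dotProduct_zero]
  simp only [hsplit, mulVec_add, dotProduct_add, add_dotProduct, mul_add, Finset.sum_add_distrib,
    Finset.sum_mul]
  simp only [mulVec_smul, dotProduct_smul, smul_dotProduct, smul_eq_mul] at hcross₁ hcross₂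
  linear_combination hcross₁ + hcross₂

variable [DecidableEq n]

theorem PosDef.log_det_add_card_le_trace {M : Matrix n n ℝ} (hM : M.PosDef) :
    Real.log M.det + Fintype.card n ≤ M.trace := by
  have hpos := hM.eigenvalues_pos
  rw [hM.1.det_eq_prod_eigenvalues, hM.1.trace_eq_sum_eigenvalues]
  simp only [RCLike.ofReal_real_eq_id, id]
  rw [Real.log_prod fun i _ => (hpos i).ne', Fintype.card_eq_sum_ones, Nat.cast_sum,
    Nat.cast_one, ← Finset.sum_add_distrib]
  gcongr with i
  linarith [Real.log_le_sub_one_of_pos (hpos i)]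

open scoped MatrixOrder in
theorem PosDef.log_det_add_card_le_log_det_add_trace_inv_mul {A B : Matrix n n ℝ}
    (hA : A.PosDef) (hB : B.PosDef) :
    Real.log B.det + Fintype.card n ≤ Real.log A.det + (A⁻¹ * B).trace := by
  set C := CFC.sqrt B
  have hC : C.IsHermitian := (CFC.sqrt_nonneg B).posSemidef.1
  have hCC : C * C = B := CFC.sqrt_mul_sqrt_self B hB.posSemidef.nonneg
  have hdetC : C.det * C.det = B.det := by rw [← det_mul, hCC]
  have hCunit : IsUnit C := (isUnit_iff_isUnit_det C).2 <|
    (left_ne_zero_of_mul (hdetC.trans_ne hB.det_pos.ne')).isUnit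
  have hM : (Cᴴ * A⁻¹ * C).PosDef :=
    hA.inv.conjTranspose_mul_mul_same (mulVec_injective_iff_isUnit.2 hCunit)
  have htrace : (Cᴴ * A⁻¹ * C).trace = (A⁻¹ * B).trace := by
    rw [hC.eq, trace_mul_cycle, hCC, trace_mul_comm]
  have hdet : (Cᴴ * A⁻¹ * C).det = B.det / A.det := by
    rw [hC.eq, det_mul, det_mul, det_nonsing_inv, Ring.inverse_eq_inv', ← hdetC]
    ring
  have := hM.log_det_add_card_le_trace
  rw [htrace, hdet, Real.log_div hB.det_pos.ne' hA.det_pos.ne'] at this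
  linarith

end Matrix

theorem sum_mul_gaussLogDensity_eq {ι : Type*} [Fintype ι] {d : ℕ} (w : ι → ℝ)
    (x : ι → Fin d → ℝ) {m : Fin d → ℝ} {T : Matrix (Fin d) (Fin d) ℝ}
    (hm : ∑ i, w i • (x i - m) = 0)
    (hT : (∑ i, w i) • T = ∑ i, w i • vecMulVec (x i - m) (x i - m))
    (μ : Fin d → ℝ) (S : Matrix (Fin d) (Fin d) ℝ) :
    ∑ i, w i * gaussLogDensity d (x i) μ S
      = (∑ i, w i) * (-((d : ℝ) / 2) * Real.log (2 * Real.pi)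
          - (1 / 2) * (Real.log S.det + (S⁻¹ * T).trace + (m - μ) ⬝ᵥ (S⁻¹ *ᵥ (m - μ)))) := by
  have hscatter : ∑ i, w i * ((x i - m) ⬝ᵥ (S⁻¹ *ᵥ (x i - m))) = (∑ i, w i) * (S⁻¹ * T).trace := by
    rw [sum_mul_dotProduct_mulVec_eq_trace w (fun i => x i - m), ← hT, Matrix.mul_smul,
      trace_smul, smul_eq_mul]
  have hquad := sum_mul_dotProduct_mulVec_sub_eq w x S⁻¹ hm μ
  rw [hscatter] at hquad
  simp only [gaussLogDensity, mul_sub, Finset.sum_sub_distrib, ← Finset.sum_mul,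
    mul_left_comm (w _) (1 / 2 : ℝ), ← Finset.mul_sum, hquad]
  ring

theorem m_step_gaussian_optimal_general
    (d N : ℕ)
    (x : Fin N → Fin d → ℝ)
    (w : Fin N → ℝ)
    (hW : 0 < ∑ i, w i)
    (μstar : Fin d → ℝ)
    (hμstar : μstar = (∑ i, w i)⁻¹ • ∑ i, w i • x i)
    (Sstar : Matrix (Fin d) (Fin d) ℝ)
    (hSstar : Sstar = (∑ i, w i)⁻¹ •
        ∑ i, w i • Matrix.vecMulVec (x i - μstar) (x i - μstar))
    (hSstarPD : Sstar.PosDef) :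
    ∀ (μ : Fin d → ℝ) (S : Matrix (Fin d) (Fin d) ℝ), S.PosDef →
      ∑ i, w i * gaussLogDensity d (x i) μ S
        ≤ ∑ i, w i * gaussLogDensity d (x i) μstar Sstar := by
  intro μ S hS
  have hm : ∑ i, w i • (x i - μstar) = 0 := hμstar ▸ sum_smul_sub_inv_smul_sum_smul w x hW.ne'
  have hT : (∑ i, w i) • Sstar = ∑ i, w i • vecMulVec (x i - μstar) (x i - μstar) := by
    rw [hSstar, smul_inv_smul₀ hW.ne']
  rw [sum_mul_gaussLogDensity_eq w x hm hT, sum_mul_gaussLogDensity_eq w x hm hT,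
    nonsing_inv_mul _ hSstarPD.det_pos.ne'.isUnit, trace_one, Fintype.card_fin, sub_self,
    zero_dotProduct]
  have hkey := hS.log_det_add_card_le_log_det_add_trace_inv_mul hSstarPD
  have hquad : 0 ≤ (μstar - μ) ⬝ᵥ (S⁻¹ *ᵥ (μstar - μ)) := by
    simpa using hS.inv.posSemidef.dotProduct_mulVec_nonneg (μstar - μ)
  rw [Fintype.card_fin] at hkey
  gcongr

/-- M-step closed form for the Gaussian parameters: the weighted mean and weighted
covariance maximize the weighted Gaussian log-likelihood. -/
theorem m_step_gaussian_optimal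
    (d N : ℕ) (hN : 1 ≤ N)
    (x : Fin N → Fin d → ℝ)
    (w : Fin N → ℝ) (hw : ∀ i, 0 ≤ w i)
    (hW : 0 < ∑ i, w i)
    (μstar : Fin d → ℝ)
    (hμstar : μstar = (∑ i, w i)⁻¹ • ∑ i, w i • x i)
    (Sstar : Matrix (Fin d) (Fin d) ℝ)
    (hSstar : Sstar = (∑ i, w i)⁻¹ •
        ∑ i, w i • Matrix.vecMulVec (x i - μstar) (x i - μstar))
    (hSstarPD : Sstar.PosDef) :
    ∀ (μ : Fin d → ℝ) (S : Matrix (Fin d) (Fin d) ℝ), S.PosDef →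
      ∑ i, w i * gaussLogDensity d (x i) μ S
        ≤ ∑ i, w i * gaussLogDensity d (x i) μstar Sstar :=
  m_step_gaussian_optimal_general d N x w hW μstar hμstar Sstar hSstar hSstarPD
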